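/- For any security view V = (D_v, ann) and any instance T conforming to the original DTD D, a node n of T is accessible w.r.t. the access specification iff n ⊨ A^acc, where A^acc := A1^acc ∧ A2^acc is a qualifier of the fragment X↑[n]. In particular, n ⊨ A1^acc iff condition (i) of the accessibility definition holds at n, and n ⊨ A2^acc iff condition (ii) holds at n. -/

import Mathlib

/-!
# Core model: XML documents, DTDs, XPath fragments and XML security views

Following the paper "XPath query rewriting over recursive XML security views":

* a DTD is a triple `(Ele, P, root)` with `P` mapping element types to regular expressions;
* XML documents are finite node-labeled ordered trees, nodes are identified with their
  positions (lists of child indices);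
* the XPath syntax below is the full fragment `X↑[n,=]`; the sub-fragments
  `X` (downward), `X↑`, `X↑[n]` are carved out by Boolean membership predicates;
* evaluation of paths/qualifiers is parametrized by an accessibility predicate `acc` on
  nodes: with `acc = fun _ => True` it is evaluation over the original document `T`, and
  with `acc = Accessible S T` it is evaluation over the (virtual) view `T_v` of `T`
  (nodes of `T_v` are identified with the accessible nodes of `T`, the parent in `T_v`
  being the nearest accessible ancestor in `T`);
* an access specification `S = (D, ann)` has a finite list of annotations with values
  `Y`, `N`, `[Q]`, and `ann(root) = Y` by default.
-/

abbrev Name := String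

/-- Node labels: element labels, or text nodes carrying a string value. -/
inductive Lab where
  | elem (a : Name)
  | text (s : String)
deriving DecidableEq

/-- Regular expressions for DTD content models. -/
inductive Regex where
  | str
  | eps
  | elem (b : Name)
  | cat (r₁ r₂ : Regex)
  | alt (r₁ r₂ : Regex)
  | star (r : Regex)

/-- `r.occurs B` : element type `B` occurs in the regular expression `r`. -/
def Regex.occurs : Regex → Name → Prop
  | .str, _ => False
  | .eps, _ => False
  | .elem b, B => b = B
  | .cat r₁ r₂, B => r₁.occurs B ∨ r₂.occurs B
  | .alt r₁ r₂, B => r₁.occurs B ∨ r₂.occurs B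
  | .star r, B => r.occurs B

/-- Size of a regular expression: number of subelement types and operators. -/
def Regex.size : Regex → ℕ
  | .str => 1
  | .eps => 1
  | .elem _ => 1
  | .cat r₁ r₂ => r₁.size + r₂.size + 1
  | .alt r₁ r₂ => r₁.size + r₂.size + 1
  | .star r => r.size + 1

/-- The language of a regular expression, over words of labels
(`str` matches any single text node). -/
def Regex.Matches : Regex → List Lab → Prop
  | .str, w => ∃ s, w = [Lab.text s]
  | .eps, w => w = []
  | .elem b, w => w = [Lab.elem b]
  | .cat r₁ r₂, w => ∃ u v, w = u ++ v ∧ r₁.Matches u ∧ r₂.Matches v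
  | .alt r₁ r₂, w => r₁.Matches w ∨ r₂.Matches w
  | .star r, w => ∃ ws : List (List Lab), (∀ u ∈ ws, r.Matches u) ∧ w = ws.flatten

/-- A DTD `D = (Ele, P, root)`. -/
structure DTD where
  Ele : Finset Name
  root : Name
  P : Name → Regex
  root_mem : root ∈ Ele
  /-- each production `P(A)` is a regular expression over `Ele` -/
  occ_mem : ∀ A ∈ Ele, ∀ B, (P A).occurs B → B ∈ Ele

/-- A DTD is recursive iff some element type is defined, directly or indirectly,
in terms of itself. -/
def DTD.Recursive (D : DTD) : Prop :=
  ∃ A, Relation.TransGen (fun X Y => (D.P X).occurs Y) A A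

/-- Finite node-labeled ordered trees (XML trees). -/
inductive XTree where
  | mk (lab : Lab) (children : List XTree)

def XTree.lab : XTree → Lab
  | .mk l _ => l

def XTree.children : XTree → List XTree
  | .mk _ c => c

/-- Node positions: paths of child indices from the root (the root is `[]`). -/
abbrev Pos := List ℕ

/-- The subtree of `t` at position `p`, if it exists. -/
def XTree.sub? : XTree → Pos → Option XTree
  | t, [] => some t
  | t, i :: p =>
    match t.children[i]? with
    | some c => XTree.sub? c p
    | none => none

/-- `n` is a node of `t`. -/
def XTree.IsNode (t : XTree) (n : Pos) : Prop := (t.sub? n).isSome = true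

/-- Element type of the node at position `n` (none for text nodes / non-nodes). -/
def typeAt (t : XTree) (n : Pos) : Option Name :=
  match t.sub? n with
  | some s =>
    match s.lab with
    | .elem a => some a
    | _ => none
  | none => none

/-- The element at position `n` has `c` as text content (a text child with value `c`). -/
def HasText (t : XTree) (n : Pos) (c : String) : Prop :=
  ∃ s, t.sub? n = some s ∧ Lab.text c ∈ s.children.map XTree.lab

/-- `m` is a strict ancestor of `n`. -/
def StrictAnc (m n : Pos) : Prop := m <+: n ∧ m ≠ n

/-- Document order on positions (lexicographic; an ancestor precedes its descendants). -/
def posLt (m n : Pos) : Prop := List.Lex (· < ·) m n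

/-- Parent position. -/
def parentPos (n : Pos) : Pos := n.dropLast

/-- `T` conforms to `D` (`T` is an instance of `D`): the root is the unique node
labeled `root`, every node is labeled with an element type of `D` or with text,
the children word of each `A`-node matches `P(A)`, and text nodes are leaves. -/
def Conforms (t : XTree) (D : DTD) : Prop :=
  t.lab = Lab.elem D.root ∧
  (∀ n s, t.sub? n = some s → s.lab = Lab.elem D.root → n = []) ∧
  (∀ n s, t.sub? n = some s →
      (∃ A, s.lab = Lab.elem A ∧ A ∈ D.Ele) ∨ ∃ c, s.lab = Lab.text c) ∧
  (∀ n s A, t.sub? n = some s → s.lab = Lab.elem A →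
      (D.P A).Matches (s.children.map XTree.lab)) ∧
  (∀ n s c, t.sub? n = some s → s.lab = Lab.text c → s.children = [])

/-! ## XPath syntax: the full fragment `X↑[n,=]` -/

inductive Axis where
  | child | descendant | self | parent | ancestor | ancestorOrSelf
deriving DecidableEq

inductive NodeTest where
  | name (a : Name)
  | star
deriving DecidableEq

mutual
  /-- XPath paths (the full fragment `X↑[n,=]`): steps, filters `p[q]`,
  position predicates `p[k]`, composition `p/p` and union `p ∪ p`. -/
  inductive XPath where
    | axis (ax : Axis) (nt : NodeTest)
    | filter (p : XPath) (q : XQual)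
    | pos (p : XPath) (k : ℕ)
    | seq (p₁ p₂ : XPath)
    | union (p₁ p₂ : XPath)
  /-- XPath qualifiers: paths, text comparison `p = c`, node comparison
  `[p₁ = p₂]`, and Boolean combinations. -/
  inductive XQual where
    | path (p : XPath)
    | cmp (p : XPath) (c : String)
    | nodeEq (p₁ p₂ : XPath)
    | and (q₁ q₂ : XQual)
    | or (q₁ q₂ : XQual)
    | not (q : XQual)
end

def Axis.downb : Axis → Bool
  | .child => true
  | .descendant => true
  | _ => false

mutual
  /-- Membership in the downward fragment `X` (only `↓`, `↓⁺`, no position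
  predicate, no node comparison). -/
  def XPath.inXb : XPath → Bool
    | .axis ax _ => ax.downb
    | .filter p q => p.inXb && q.inXb
    | .pos _ _ => false
    | .seq p₁ p₂ => p₁.inXb && p₂.inXb
    | .union p₁ p₂ => p₁.inXb && p₂.inXb
  def XQual.inXb : XQual → Bool
    | .path p => p.inXb
    | .cmp p _ => p.inXb
    | .nodeEq _ _ => false
    | .and q₁ q₂ => q₁.inXb && q₂.inXb
    | .or q₁ q₂ => q₁.inXb && q₂.inXb
    | .not q => q.inXb
end

mutual
  /-- Membership in `X↑` (`X` plus the self and upward axes). -/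
  def XPath.inXUpb : XPath → Bool
    | .axis _ _ => true
    | .filter p q => p.inXUpb && q.inXUpb
    | .pos _ _ => false
    | .seq p₁ p₂ => p₁.inXUpb && p₂.inXUpb
    | .union p₁ p₂ => p₁.inXUpb && p₂.inXUpb
  def XQual.inXUpb : XQual → Bool
    | .path p => p.inXUpb
    | .cmp p _ => p.inXUpb
    | .nodeEq _ _ => false
    | .and q₁ q₂ => q₁.inXUpb && q₂.inXUpb
    | .or q₁ q₂ => q₁.inXUpb && q₂.inXUpb
    | .not q => q.inXUpb
end

mutual
  /-- Membership in `X↑[n]` (`X↑` plus the position predicate; no node comparison). -/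
  def XPath.inXUpPosb : XPath → Bool
    | .axis _ _ => true
    | .filter p q => p.inXUpPosb && q.inXUpPosb
    | .pos p _ => p.inXUpPosb
    | .seq p₁ p₂ => p₁.inXUpPosb && p₂.inXUpPosb
    | .union p₁ p₂ => p₁.inXUpPosb && p₂.inXUpPosb
  def XQual.inXUpPosb : XQual → Bool
    | .path p => p.inXUpPosb
    | .cmp p _ => p.inXUpPosb
    | .nodeEq _ _ => false
    | .and q₁ q₂ => q₁.inXUpPosb && q₂.inXUpPosb
    | .or q₁ q₂ => q₁.inXUpPosb && q₂.inXUpPosb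
    | .not q => q.inXUpPosb
end

mutual
  /-- The element-type names occurring in a path. -/
  def XPath.names : XPath → List Name
    | .axis _ (.name a) => [a]
    | .axis _ .star => []
    | .filter p q => p.names ++ q.names
    | .pos p _ => p.names
    | .seq p₁ p₂ => p₁.names ++ p₂.names
    | .union p₁ p₂ => p₁.names ++ p₂.names
  def XQual.names : XQual → List Name
    | .path p => p.names
    | .cmp p _ => p.names
    | .nodeEq p₁ p₂ => p₁.names ++ p₂.names
    | .and q₁ q₂ => q₁.names ++ q₂.names
    | .or q₁ q₂ => q₁.names ++ q₂.names
    | .not q => q.names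
end

/-! ## XPath semantics, parametrized by an accessibility predicate -/

def TestOk (t : XTree) (nt : NodeTest) (y : Pos) : Prop :=
  match nt with
  | .name a => typeAt t y = some a
  | .star => (typeAt t y).isSome = true

/-- Axis relations in the tree restricted to `acc`-nodes: the child relation is
"nearest accessible descendant", etc. (with `acc = fun _ => True` these are the
usual axes of the original document). -/
def AxisRel (acc : Pos → Prop) : Axis → Pos → Pos → Prop
  | .self, x, y => y = x
  | .child, x, y => StrictAnc x y ∧ acc y ∧ ∀ z, StrictAnc x z → StrictAnc z y → ¬ acc z
  | .descendant, x, y => StrictAnc x y ∧ acc y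
  | .parent, x, y => StrictAnc y x ∧ acc y ∧ ∀ z, StrictAnc y z → StrictAnc z x → ¬ acc z
  | .ancestor, x, y => StrictAnc y x ∧ acc y
  | .ancestorOrSelf, x, y => (y = x ∨ StrictAnc y x) ∧ acc y

/-- The `k`-th node (1-indexed) of an (ordered) node set; reverse axes produce their
results nearest-first, so the order used here is reverse document order. -/
noncomputable def nthRev (Sp : Set Pos) (k : ℕ) : Set Pos :=
  {x | x ∈ Sp ∧ ({y | y ∈ Sp ∧ posLt x y}).ncard = k - 1}

mutual
  /-- `evalP t acc p x` : the node set `x⟦p⟧` obtained by evaluating path `p`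
  at context node `x`, in the document `t` restricted to `acc`-nodes. -/
  noncomputable def evalP (t : XTree) (acc : Pos → Prop) : XPath → Pos → Set Pos
    | .axis ax nt, x => {y | t.IsNode y ∧ AxisRel acc ax x y ∧ TestOk t nt y}
    | .filter p q, x => {y | y ∈ evalP t acc p x ∧ evalQ t acc q y}
    | .pos p k, x => nthRev (evalP t acc p x) k
    | .seq p₁ p₂, x => {z | ∃ y, y ∈ evalP t acc p₁ x ∧ z ∈ evalP t acc p₂ y}
    | .union p₁ p₂, x => evalP t acc p₁ x ∪ evalP t acc p₂ x
  /-- `evalQ t acc q x` : the qualifier `q` holds at context node `x` (`x ⊨ q`). -/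
  noncomputable def evalQ (t : XTree) (acc : Pos → Prop) : XQual → Pos → Prop
    | .path p, x => (evalP t acc p x).Nonempty
    | .cmp p c, x => ∃ y, y ∈ evalP t acc p x ∧ HasText t y c
    | .nodeEq p₁ p₂, x => ∃ y, evalP t acc p₁ x = {y} ∧ evalP t acc p₂ x = {y}
    | .and q₁ q₂, x => evalQ t acc q₁ x ∧ evalQ t acc q₂ x
    | .or q₁ q₂, x => evalQ t acc q₁ x ∨ evalQ t acc q₂ x
    | .not q, x => ¬ evalQ t acc q x
end

/-! ## Access specifications, accessibility, security views -/

/-- Annotation values `Y`, `N`, `[Q]`. -/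
inductive AnnVal where
  | Y
  | N
  | cond (q : XQual)

/-- An access specification `S = (D, ann)`: `ann` is a finite partial map given as a
list of triples `(A, B, ann(A,B))`, defined only on productions of `D`, with
qualifiers taken from the downward fragment `X`; `ann(root) = Y` by default. -/
structure AccessSpec where
  D : DTD
  ann : List (Name × Name × AnnVal)
  ann_nodup : (ann.map fun e => (e.1, e.2.1)).Nodup
  ann_dom : ∀ e ∈ ann, e.1 ∈ D.Ele ∧ (D.P e.1).occurs e.2.1
  ann_X : ∀ e ∈ ann, ∀ q, e.2.2 = AnnVal.cond q → q.inXb = true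

/-- `ann(A,B)`, if defined. -/
def AccessSpec.lookup (S : AccessSpec) (A B : Name) : Option AnnVal :=
  (S.ann.find? fun e => e.1 == A && e.2.1 == B).map fun e => e.2.2

/-- Node `n` (of type `B`, with parent of type `A`) is concerned by the
annotation value `v` : `ann(A,B) = v`. -/
def ConcernedBy (S : AccessSpec) (t : XTree) (n : Pos) (v : AnnVal) : Prop :=
  ∃ A B, n ≠ [] ∧ typeAt t n = some B ∧ typeAt t (parentPos n) = some A ∧
    S.lookup A B = some v

/-- Node `n` is concerned by an annotation. -/
def Concerned (S : AccessSpec) (t : XTree) (n : Pos) : Prop := ∃ v, ConcernedBy S t n v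

/-- The annotation concerning `n` is valid at `n` : its value is `Y`, or it is
`[Q]` and `n ⊨ Q` (annotation qualifiers are evaluated over the original document). -/
def ValidAnnAt (S : AccessSpec) (t : XTree) (n : Pos) : Prop :=
  ConcernedBy S t n AnnVal.Y ∨
    ∃ q, ConcernedBy S t n (AnnVal.cond q) ∧ evalQ t (fun _ => True) q n

/-- Concerned, treating the root as concerned by the default annotation `ann(root) = Y`. -/
def ConcernedR (S : AccessSpec) (t : XTree) (n : Pos) : Prop := n = [] ∨ Concerned S t n

/-- Valid annotation, the root's default annotation being valid. -/
def ValidR (S : AccessSpec) (t : XTree) (n : Pos) : Prop := n = [] ∨ ValidAnnAt S t n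

/-- Condition (i) of the accessibility definition: `n` is concerned by a valid
annotation, or `n` is not concerned by an annotation and the first (nearest)
ancestor of `n` concerned by an annotation has that annotation valid at it. -/
def CondI (S : AccessSpec) (t : XTree) (n : Pos) : Prop :=
  (ConcernedR S t n ∧ ValidR S t n) ∨
    (¬ ConcernedR S t n ∧ ∃ m, StrictAnc m n ∧ ConcernedR S t m ∧ ValidR S t m ∧
      ∀ m', StrictAnc m m' → StrictAnc m' n → ¬ Concerned S t m')

/-- Condition (ii): every ancestor concerned by an annotation `[Q']` satisfies `Q'`. -/
def CondII (S : AccessSpec) (t : XTree) (n : Pos) : Prop :=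
  ∀ m q, StrictAnc m n → ConcernedBy S t m (AnnVal.cond q) →
    evalQ t (fun _ => True) q m

/-- Node `n` of the instance `T` is accessible w.r.t. the access specification `S`. -/
def Accessible (S : AccessSpec) (t : XTree) (n : Pos) : Prop :=
  t.IsNode n ∧ CondI S t n ∧ CondII S t n

/-- The element types of the DTD view `D_v` (the element types of `D` that are not
eliminated): the root, and every type reachable from an accessible type through a
production edge not annotated `N`. -/
inductive AccType (S : AccessSpec) : Name → Prop where
  | root : AccType S S.D.root
  | step {A B : Name} : AccType S A → (S.D.P A).occurs B →
      S.lookup A B ≠ some AnnVal.N → AccType S B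

/-- `B` is a child type of `A` in the DTD view (element types hidden in between
are spliced out). -/
inductive ViewChild (S : AccessSpec) : Name → Name → Prop where
  | direct {A B} : (S.D.P A).occurs B → S.lookup A B ≠ some AnnVal.N → ViewChild S A B
  | through {A C B} : (S.D.P A).occurs C → S.lookup A C = some AnnVal.N →
      ViewChild S C B → ViewChild S A B

/-- The child-type relation of the DTD view `D_v`. -/
def ViewChildV (S : AccessSpec) (A B : Name) : Prop :=
  AccType S A ∧ AccType S B ∧ ViewChild S A B

/-- The security view `V = (D_v, ann)` is recursive: its DTD view `D_v` is recursive. -/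
def ViewRecursive (S : AccessSpec) : Prop :=
  ∃ A, Relation.TransGen (ViewChildV S) A A

/-- `|D_v|` : the number of element types of the DTD view. -/
noncomputable def viewSize (S : AccessSpec) : ℕ :=
  {A | A ∈ S.D.Ele ∧ AccType S A}.ncard

/-- A query formulated over the DTD view `D_v` : all its element-type names are
element types of `D_v`. -/
def OverView (S : AccessSpec) (p : XPath) : Prop :=
  ∀ a ∈ p.names, AccType S a

/-- `Q(T_v)` : evaluation of `Q` over the (virtual) view `T_v` of `T`, nodes of `T_v`
being identified with the accessible nodes of `T`. -/
noncomputable def evalView (S : AccessSpec) (t : XTree) (p : XPath) (x : Pos) : Set Pos :=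
  evalP t (Accessible S t) p x

/-- `Q(T)` : evaluation of `Q` over the original document `T`. -/
noncomputable def evalFull (t : XTree) (p : XPath) (x : Pos) : Set Pos :=
  evalP t (fun _ => True) p x

/-! ## The predicates `A₁^acc`, `A₂^acc`, `A^acc`, `A⁺`, `A^B` -/

/-- A trivially true qualifier (at element nodes). -/
def qTrue : XQual := XQual.path (XPath.axis Axis.self NodeTest.star)

/-- `ε::A/↑::A'` for an annotation entry `ann(A',A)` (entry `(A', A, v)`). -/
def annStep (e : Name × Name × AnnVal) : XQual :=
  XQual.path (XPath.seq (XPath.axis Axis.self (NodeTest.name e.2.1))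
    (XPath.axis Axis.parent (NodeTest.name e.1)))

/-- `ε::A.σ(A',A)/↑::A'` : `ε::A[Q]/↑::A'` if `ann(A',A) = [Q]`, `ε::A/↑::A'` if
`ann(A',A) = Y`, nothing if `ann(A',A) = N`. -/
def annStepSigma (e : Name × Name × AnnVal) : Option XQual :=
  match e.2.2 with
  | AnnVal.Y => some (annStep e)
  | AnnVal.cond q => some (XQual.path (XPath.seq
      (XPath.filter (XPath.axis Axis.self (NodeTest.name e.2.1)) q)
      (XPath.axis Axis.parent (NodeTest.name e.1))))
  | AnnVal.N => none

/-- `ε::root ∨_{ann(A',A) ∈ ann} ε::A/↑::A'`. -/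
def qual1 (S : AccessSpec) : XQual :=
  S.ann.foldr (fun e q => XQual.or (annStep e) q)
    (XQual.path (XPath.axis Axis.self (NodeTest.name S.D.root)))

/-- `ε::root ∨_{ann(A',A) = Y | [Q]} ε::A.σ(A',A)/↑::A'`. -/
def qual2 (S : AccessSpec) : XQual :=
  S.ann.foldr
    (fun e q => match annStepSigma e with | some s => XQual.or s q | none => q)
    (XQual.path (XPath.axis Axis.self (NodeTest.name S.D.root)))

/-- `A₁^acc := ↑*::*[qual1][1][qual2]`. -/
def A1acc (S : AccessSpec) : XPath :=
  XPath.filter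
    (XPath.pos (XPath.filter (XPath.axis Axis.ancestorOrSelf NodeTest.star) (qual1 S)) 1)
    (qual2 S)

/-- `A₂^acc := ⋀_{ann(A',A) = [Q]} not (↑⁺::A[not Q]/↑::A')`. -/
def A2acc (S : AccessSpec) : XQual :=
  S.ann.foldr
    (fun e q => match e.2.2 with
      | AnnVal.cond qq => XQual.and (XQual.not (XQual.path (XPath.seq
          (XPath.filter (XPath.axis Axis.ancestor (NodeTest.name e.2.1)) (XQual.not qq))
          (XPath.axis Axis.parent (NodeTest.name e.1))))) q
      | _ => q)
    qTrue

/-- The accessibility predicate `A^acc := A₁^acc ∧ A₂^acc`. -/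
def Aacc (S : AccessSpec) : XQual := XQual.and (XQual.path (A1acc S)) (A2acc S)

/-- `A⁺ := ↑⁺::*[A₁^acc]` (the accessible ancestors, nearest first). -/
def Aplus (S : AccessSpec) : XPath :=
  XPath.filter (XPath.axis Axis.ancestor NodeTest.star) (XQual.path (A1acc S))

/-- `A^B := A⁺[1]/ε::B`. -/
def AB (S : AccessSpec) (B : Name) : XPath :=
  XPath.seq (XPath.pos (Aplus S) 1) (XPath.axis Axis.self (NodeTest.name B))

/-!
Among the ancestors-or-self of an element node `n`, which `↑*::*` reaches because text
nodes are leaves, the qualifier of `A₁^acc` keeps those concerned by an annotation (the root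
being the unique `root`-labelled node, `ε::root` singles it out). They lie on the branch of
`n`, so the first of them in reverse document order, selected by `[1]`, is the deepest one,
and the final qualifier checks that its annotation is valid: this is condition (i).
`A₂^acc` is condition (ii) read literally: for each `ann(A',A) = [Q]`, no strict ancestor
of type `A` with a parent of type `A'` violates `Q`.
-/

section Positions

lemma sub?_append (t : XTree) (p q : Pos) :
    t.sub? (p ++ q) = (t.sub? p).bind (·.sub? q) := by
  induction p generalizing t with
  | nil => rfl
  | cons i p ih =>
    simp only [List.cons_append, XTree.sub?]
    cases t.children[i]? <;> simp [ih]

lemma isNode_of_isSome_typeAt {t : XTree} {n : Pos} (h : (typeAt t n).isSome) :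
    t.IsNode n := by
  unfold typeAt at h
  unfold XTree.IsNode
  cases hs : t.sub? n <;> simp_all

lemma typeAt_eq_some_iff {t : XTree} {n : Pos} {A : Name} :
    typeAt t n = some A ↔ ∃ s, t.sub? n = some s ∧ s.lab = Lab.elem A := by
  unfold typeAt
  cases t.sub? n with
  | none => simp
  | some s => cases hl : s.lab <;> simp [hl]

lemma prefix_antisymm {m n : Pos} (h₁ : m <+: n) (h₂ : n <+: m) : m = n :=
  h₁.eq_of_length_le h₂.length_le

lemma StrictAnc.length_lt {m n : Pos} (h : StrictAnc m n) : m.length < n.length :=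
  lt_of_le_of_ne h.1.length_le fun hl => h.2 (h.1.eq_of_length hl)

lemma axisRel_parent_true {x y : Pos} :
    AxisRel (fun _ => True) Axis.parent x y ↔ x ≠ [] ∧ y = parentPos x := by
  have hlen : (parentPos x).length = x.length - 1 := List.length_dropLast
  constructor
  · rintro ⟨hyx, -, hbetween⟩
    have hx : x ≠ [] := by
      rintro rfl
      exact hyx.2 (List.prefix_nil.mp hyx.1)
    have hx' : x.length ≠ 0 := by simpa using hx
    have hparent : StrictAnc (parentPos x) x :=
      ⟨List.dropLast_prefix x, fun h => by have := congrArg List.length h; omega⟩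
    refine ⟨hx, by_contra fun hy => hbetween (parentPos x) ⟨?_, hy⟩ hparent trivial⟩
    have := hyx.length_lt
    exact List.prefix_of_prefix_length_le hyx.1 (List.dropLast_prefix x) (by omega)
  · rintro ⟨hx, rfl⟩
    have hx' : x.length ≠ 0 := by simpa using hx
    refine ⟨⟨List.dropLast_prefix x, fun h => ?_⟩, trivial, fun z hz₁ hz₂ _ => ?_⟩
    · have := congrArg List.length h
      omega
    · have := hz₁.length_lt
      have := hz₂.length_lt
      omega

lemma not_posLt_iff_prefix {x y n : Pos} (hx : x <+: n) (hy : y <+: n) :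
    ¬ posLt x y ↔ y <+: x := by
  refine ⟨fun hxy => ?_, List.IsPrefix.le⟩
  rcases List.prefix_or_prefix_of_prefix hx hy with h | h
  · rcases List.le_iff_lt_or_eq.mp (List.IsPrefix.le h) with hlt | rfl
    · exact absurd hlt hxy
    · exact List.prefix_refl x
  · exact h

lemma mem_nthRev_one {A : Set Pos} (hA : A.Finite) {x : Pos} :
    x ∈ nthRev A 1 ↔ x ∈ A ∧ ∀ y ∈ A, ¬ posLt x y := by
  have hfin : {y | y ∈ A ∧ posLt x y}.Finite := hA.subset fun _ hy => hy.1
  show x ∈ A ∧ _ = 1 - 1 ↔ _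
  rw [Nat.sub_self, Set.ncard_eq_zero hfin, Set.eq_empty_iff_forall_notMem]
  simp only [Set.mem_ofPred_eq, not_and]

lemma mem_nthRev_one_of_prefix {A : Set Pos} {n x : Pos} (hA : ∀ y ∈ A, y <+: n) :
    x ∈ nthRev A 1 ↔ x ∈ A ∧ ∀ y ∈ A, y <+: x := by
  have hfin : A.Finite :=
    (List.finite_toSet n.inits).subset fun y hy => (List.mem_inits y n).2 (hA y hy)
  rw [mem_nthRev_one hfin]
  exact and_congr_right fun hx => forall₂_congr fun y hy => not_posLt_iff_prefix (hA x hx) (hA y hy)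

end Positions

section Conformance

variable {D : DTD} {t : XTree} (hT : Conforms t D)
include hT

lemma isSome_typeAt_of_strictAnc {m n : Pos} (h : StrictAnc m n) (hn : t.IsNode n) :
    (typeAt t m).isSome := by
  obtain ⟨⟨r, rfl⟩, hr⟩ := h
  obtain ⟨i, r, rfl⟩ := List.exists_cons_of_ne_nil (by simpa using hr)
  unfold XTree.IsNode at hn
  rw [sub?_append] at hn
  obtain ⟨s, hs⟩ := Option.isSome_iff_exists.mp (Option.isSome_of_isSome_bind hn)
  rcases hT.2.2.1 m s hs with ⟨A, hA, -⟩ | ⟨c, hc⟩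
  · simp [typeAt_eq_some_iff.mpr ⟨s, hs, hA⟩]
  · rw [hs, Option.bind_some, XTree.sub?, hT.2.2.2.2 m s c hs hc] at hn
    simp at hn

lemma isSome_typeAt_of_prefix {m n : Pos} (h : m <+: n)
    (hn : (typeAt t n).isSome) : (typeAt t m).isSome := by
  by_cases hmn : m = n
  · exact hmn ▸ hn
  · exact isSome_typeAt_of_strictAnc hT ⟨h, hmn⟩ (isNode_of_isSome_typeAt hn)

lemma typeAt_eq_root_iff {m : Pos} : typeAt t m = some D.root ↔ m = [] := by
  refine ⟨fun h => ?_, ?_⟩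
  · obtain ⟨s, hs, hl⟩ := typeAt_eq_some_iff.mp h
    exact hT.2.1 m s hs hl
  · rintro rfl
    exact typeAt_eq_some_iff.mpr ⟨t, rfl, hT.1⟩

end Conformance

section Semantics

variable {t : XTree} {acc : Pos → Prop}

lemma evalQ_foldr_of_or {α : Type*} (g : α → XQual → XQual) (P : α → Pos → Prop)
    (hg : ∀ a q x, evalQ t acc (g a q) x ↔ P a x ∨ evalQ t acc q x)
    (l : List α) (base : XQual) (x : Pos) :
    evalQ t acc (l.foldr g base) x ↔ (∃ a ∈ l, P a x) ∨ evalQ t acc base x := by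
  induction l with
  | nil => simp
  | cons a l ih => simp [hg, ih, or_assoc]

lemma evalQ_foldr_of_and {α : Type*} (g : α → XQual → XQual) (P : α → Pos → Prop)
    (hg : ∀ a q x, evalQ t acc (g a q) x ↔ P a x ∧ evalQ t acc q x)
    (l : List α) (base : XQual) (x : Pos) :
    evalQ t acc (l.foldr g base) x ↔ (∀ a ∈ l, P a x) ∧ evalQ t acc base x := by
  induction l with
  | nil => simp
  | cons a l ih => simp [hg, ih, and_assoc]

@[simp] lemma evalQ_and {q₁ q₂ : XQual} {x : Pos} :
    evalQ t acc (XQual.and q₁ q₂) x ↔ evalQ t acc q₁ x ∧ evalQ t acc q₂ x := Iff.rfl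

@[simp] lemma evalQ_not {q : XQual} {x : Pos} :
    evalQ t acc (XQual.not q) x ↔ ¬ evalQ t acc q x := Iff.rfl

lemma mem_evalP_filter {p : XPath} {q : XQual} {x y : Pos} :
    y ∈ evalP t acc (XPath.filter p q) x ↔ y ∈ evalP t acc p x ∧ evalQ t acc q y := Iff.rfl

lemma mem_evalP_self_name {B : Name} {x y : Pos} :
    y ∈ evalP t acc (XPath.axis Axis.self (NodeTest.name B)) x ↔ y = x ∧ typeAt t x = some B := by
  simp only [evalP, AxisRel, TestOk, Set.mem_ofPred_eq]
  constructor
  · rintro ⟨-, rfl, h⟩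
    exact ⟨rfl, h⟩
  · rintro ⟨rfl, h⟩
    exact ⟨isNode_of_isSome_typeAt (by simp [h]), rfl, h⟩

lemma mem_evalP_ancestor_name {B : Name} {x y : Pos} :
    y ∈ evalP t acc (XPath.axis Axis.ancestor (NodeTest.name B)) x ↔
      StrictAnc y x ∧ acc y ∧ typeAt t y = some B := by
  simp only [evalP, AxisRel, TestOk, Set.mem_ofPred_eq]
  exact ⟨fun ⟨_, h, hB⟩ => ⟨h.1, h.2, hB⟩,
    fun ⟨h, ha, hB⟩ => ⟨isNode_of_isSome_typeAt (by simp [hB]), ⟨h, ha⟩, hB⟩⟩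

lemma evalQ_qTrue {x : Pos} : evalQ t acc qTrue x ↔ (typeAt t x).isSome := by
  simp only [qTrue, evalQ, evalP, AxisRel, TestOk, Set.Nonempty, Set.mem_ofPred_eq]
  exact ⟨fun ⟨_, _, rfl, h⟩ => h, fun h => ⟨x, isNode_of_isSome_typeAt h, rfl, h⟩⟩

lemma evalQ_seq_parent {p : XPath} {A : Name} {x : Pos} :
    evalQ t (fun _ => True) (XQual.path (XPath.seq p (XPath.axis Axis.parent (NodeTest.name A)))) x
      ↔ ∃ y ∈ evalP t (fun _ => True) p x, y ≠ [] ∧ typeAt t (parentPos y) = some A := by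
  simp only [evalQ, evalP, axisRel_parent_true, TestOk, Set.Nonempty, Set.mem_ofPred_eq]
  constructor
  · rintro ⟨_, y, hy, -, ⟨hne, rfl⟩, hA⟩
    exact ⟨y, hy, hne, hA⟩
  · rintro ⟨y, hy, hne, hA⟩
    exact ⟨_, y, hy, isNode_of_isSome_typeAt (by simp [hA]), ⟨hne, rfl⟩, hA⟩

lemma evalQ_annStep {e : Name × Name × AnnVal} {m : Pos} :
    evalQ t (fun _ => True) (annStep e) m ↔
      m ≠ [] ∧ typeAt t m = some e.2.1 ∧ typeAt t (parentPos m) = some e.1 := by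
  simp only [annStep, evalQ_seq_parent, mem_evalP_self_name, and_assoc, exists_eq_left]
  tauto

lemma evalQ_annStepSigma {A B : Name} {v : AnnVal} {m : Pos} :
    (∃ s, annStepSigma (A, B, v) = some s ∧ evalQ t (fun _ => True) s m) ↔
      (m ≠ [] ∧ typeAt t m = some B ∧ typeAt t (parentPos m) = some A) ∧
        (v = AnnVal.Y ∨ ∃ q, v = AnnVal.cond q ∧ evalQ t (fun _ => True) q m) := by
  cases v with
  | Y => simp [annStepSigma, evalQ_annStep]
  | N => simp [annStepSigma]
  | cond q =>
    simp only [annStepSigma, Option.some.injEq, exists_eq_left', evalQ_seq_parent,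
      mem_evalP_filter, mem_evalP_self_name, and_assoc, exists_eq_left, reduceCtorEq,
      AnnVal.cond.injEq, false_or]
    tauto

end Semantics

section Annotations

lemma AccessSpec.lookup_eq_some_iff {S : AccessSpec} {A B : Name} {v : AnnVal} :
    S.lookup A B = some v ↔ (A, B, v) ∈ S.ann := by
  unfold AccessSpec.lookup
  constructor
  · intro h
    obtain ⟨e, he, rfl⟩ := Option.map_eq_some_iff.mp h
    obtain ⟨rfl, rfl⟩ : e.1 = A ∧ e.2.1 = B := by simpa using List.find?_some he
    exact List.mem_of_find?_eq_some he
  · intro hmem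
    obtain ⟨e, he⟩ := Option.isSome_iff_exists.mp
      (List.find?_isSome (p := fun e => e.1 == A && e.2.1 == B) |>.mpr ⟨_, hmem, by simp⟩)
    have hkey : e.1 = A ∧ e.2.1 = B := by simpa using List.find?_some he
    have : e = (A, B, v) :=
      List.inj_on_of_nodup_map S.ann_nodup (List.mem_of_find?_eq_some he) hmem (by simp [hkey])
    simp [he, this]

variable {S : AccessSpec} {t : XTree}

lemma evalQ_self_root (hT : Conforms t S.D) {acc : Pos → Prop} {m : Pos} :
    evalQ t acc (XQual.path (XPath.axis Axis.self (NodeTest.name S.D.root))) m ↔ m = [] := by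
  simp [evalQ, Set.Nonempty, mem_evalP_self_name, typeAt_eq_root_iff hT]

lemma concerned_iff_exists_annStep {m : Pos} :
    Concerned S t m ↔ ∃ e ∈ S.ann, evalQ t (fun _ => True) (annStep e) m := by
  constructor
  · rintro ⟨v, A, B, hne, hB, hA, hlookup⟩
    exact ⟨(A, B, v), AccessSpec.lookup_eq_some_iff.mp hlookup, evalQ_annStep.mpr ⟨hne, hB, hA⟩⟩
  · rintro ⟨⟨A, B, v⟩, he, h⟩
    obtain ⟨hne, hB, hA⟩ := evalQ_annStep.mp h
    exact ⟨v, A, B, hne, hB, hA, AccessSpec.lookup_eq_some_iff.mpr he⟩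

lemma validAnnAt_iff_exists_annStepSigma {m : Pos} :
    ValidAnnAt S t m ↔
      ∃ e ∈ S.ann, ∃ s, annStepSigma e = some s ∧ evalQ t (fun _ => True) s m := by
  constructor
  · rintro (⟨A, B, hne, hB, hA, hlookup⟩ | ⟨q, ⟨A, B, hne, hB, hA, hlookup⟩, hq⟩)
    · exact ⟨(A, B, AnnVal.Y), AccessSpec.lookup_eq_some_iff.mp hlookup,
        evalQ_annStepSigma.mpr ⟨⟨hne, hB, hA⟩, Or.inl rfl⟩⟩
    · exact ⟨(A, B, AnnVal.cond q), AccessSpec.lookup_eq_some_iff.mp hlookup,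
        evalQ_annStepSigma.mpr ⟨⟨hne, hB, hA⟩, Or.inr ⟨q, rfl, hq⟩⟩⟩
  · rintro ⟨⟨A, B, v⟩, he, h⟩
    obtain ⟨⟨hne, hB, hA⟩, rfl | ⟨q, rfl, hq⟩⟩ := evalQ_annStepSigma.mp h
    · exact Or.inl ⟨A, B, hne, hB, hA, AccessSpec.lookup_eq_some_iff.mpr he⟩
    · exact Or.inr ⟨q, ⟨A, B, hne, hB, hA, AccessSpec.lookup_eq_some_iff.mpr he⟩, hq⟩

lemma evalQ_qual1 (hT : Conforms t S.D) {m : Pos} :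
    evalQ t (fun _ => True) (qual1 S) m ↔ ConcernedR S t m := by
  rw [qual1, evalQ_foldr_of_or _ (fun e x => evalQ t (fun _ => True) (annStep e) x)
    (fun _ _ _ => Iff.rfl), evalQ_self_root hT, ← concerned_iff_exists_annStep, ConcernedR,
    or_comm]

lemma evalQ_qual2 (hT : Conforms t S.D) {m : Pos} :
    evalQ t (fun _ => True) (qual2 S) m ↔ ValidR S t m := by
  rw [qual2, evalQ_foldr_of_or _
    (fun e x => ∃ s, annStepSigma e = some s ∧ evalQ t (fun _ => True) s x)
    (fun e _ _ => by cases annStepSigma e <;> simp [evalQ]), evalQ_self_root hT,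
    ← validAnnAt_iff_exists_annStepSigma, ValidR, or_comm]

lemma evalQ_A2acc {n : Pos} :
    evalQ t (fun _ => True) (A2acc S) n ↔ CondII S t n ∧ (typeAt t n).isSome := by
  set P : Name × Name × AnnVal → Pos → Prop := fun e x => ∀ q, e.2.2 = AnnVal.cond q →
    ∀ y, StrictAnc y x → y ≠ [] → typeAt t y = some e.2.1 →
      typeAt t (parentPos y) = some e.1 → evalQ t (fun _ => True) q y
  unfold A2acc
  refine (evalQ_foldr_of_and _ P (fun e q x => ?_) S.ann qTrue n).trans ?_
  · rcases e with ⟨A, B, _ | _ | qq⟩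
    · simp [P]
    · simp [P]
    · simp only [evalQ_and, evalQ_not, evalQ_seq_parent, mem_evalP_filter,
        mem_evalP_ancestor_name, P, AnnVal.cond.injEq, forall_eq']
      constructor
      · rintro ⟨hbad, hq⟩
        exact ⟨fun y hy hne hB hA => by_contra fun h => hbad ⟨y, ⟨⟨hy, trivial, hB⟩, h⟩, hne, hA⟩, hq⟩
      · rintro ⟨hP, hq⟩
        exact ⟨fun ⟨y, ⟨⟨hy, _, hB⟩, h⟩, hne, hA⟩ => h (hP y hy hne hB hA), hq⟩
  · refine and_congr ⟨fun h m q hmn ⟨A, B, hne, hB, hA, hlookup⟩ => ?_, fun h => ?_⟩ evalQ_qTrue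
    · exact h _ (AccessSpec.lookup_eq_some_iff.mp hlookup) q rfl m hmn hne hB hA
    · rintro ⟨A, B, v⟩ he q rfl y hy hne hB hA
      exact h y q hy ⟨A, B, hne, hB, hA, AccessSpec.lookup_eq_some_iff.mpr he⟩

end Annotations

section Accessibility

variable {S : AccessSpec} {t : XTree}

lemma condI_iff_exists_deepest_concerned {n : Pos} :
    CondI S t n ↔ ∃ m, m <+: n ∧ ConcernedR S t m ∧
      (∀ m', m' <+: n → ConcernedR S t m' → m' <+: m) ∧ ValidR S t m := by
  constructor
  · rintro (⟨hc, hv⟩ | ⟨hnc, m, hmn, hc, hv, hbetween⟩)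
    · exact ⟨n, List.prefix_refl n, hc, fun _ h _ => h, hv⟩
    · refine ⟨m, hmn.1, hc, fun m' hm'n hc' => ?_, hv⟩
      rcases List.prefix_or_prefix_of_prefix hmn.1 hm'n with hmm' | hm'm
      · by_contra hne
        have hm' : StrictAnc m m' := ⟨hmm', fun h => hne (h ▸ List.prefix_refl m)⟩
        have hm'n' : StrictAnc m' n := ⟨hm'n, by rintro rfl; exact hnc hc'⟩
        refine hbetween m' hm' hm'n' (hc'.resolve_left ?_)
        rintro rfl
        exact hm'.2 (List.prefix_nil.mp hm'.1)
      · exact hm'm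
  · rintro ⟨m, hmn, hc, hdeepest, hv⟩
    by_cases hm : m = n
    · exact Or.inl (hm ▸ ⟨hc, hv⟩)
    refine Or.inr ⟨fun hcn => hm (prefix_antisymm hmn (hdeepest n (List.prefix_refl n) hcn)),
      m, ⟨hmn, hm⟩, hc, hv, fun m' hmm' hm'n hc' => ?_⟩
    exact hmm'.2 (prefix_antisymm hmm'.1 (hdeepest m' hm'n.1 (Or.inr hc')))

variable (hT : Conforms t S.D)
include hT

lemma evalP_ancestorOrSelf_qual1 {n : Pos} (hn : (typeAt t n).isSome) :
    evalP t (fun _ => True) (XPath.filter (XPath.axis Axis.ancestorOrSelf NodeTest.star) (qual1 S)) n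
      = {m | m <+: n ∧ ConcernedR S t m} := by
  ext m
  rw [mem_evalP_filter, evalQ_qual1 hT]
  simp only [evalP, AxisRel, TestOk, Set.mem_ofPred_eq, and_true]
  constructor
  · rintro ⟨⟨-, hmn, -⟩, hc⟩
    refine ⟨?_, hc⟩
    rcases hmn with rfl | h
    exacts [List.prefix_refl m, h.1]
  · rintro ⟨hmn, hc⟩
    have hm := isSome_typeAt_of_prefix hT hmn hn
    refine ⟨⟨isNode_of_isSome_typeAt hm, ?_, hm⟩, hc⟩
    by_cases h : m = n
    exacts [Or.inl h, Or.inr ⟨hmn, h⟩]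

lemma evalQ_A1acc {n : Pos} (hn : (typeAt t n).isSome) :
    evalQ t (fun _ => True) (XQual.path (A1acc S)) n ↔ CondI S t n := by
  rw [condI_iff_exists_deepest_concerned]
  change (∃ m, m ∈ nthRev (evalP t _ (XPath.filter _ (qual1 S)) n) 1 ∧
    evalQ t _ (qual2 S) m) ↔ _
  rw [evalP_ancestorOrSelf_qual1 hT hn]
  simp only [mem_nthRev_one_of_prefix (A := {m | m <+: n ∧ ConcernedR S t m}) fun _ hm => hm.1,
    evalQ_qual2 hT, Set.mem_ofPred_eq, and_imp, and_assoc]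

end Accessibility

/-- For any security view `V = (D_v, ann)` and any instance `T`
conforming to the original DTD `D`, an (element) node `n` of `T` is accessible
w.r.t. the access specification iff `n ⊨ A^acc`, where `A^acc := A₁^acc ∧ A₂^acc`
is a qualifier of the fragment `X↑[n]`. In particular, `n ⊨ A₁^acc` iff condition
(i) of the accessibility definition holds at `n`, and `n ⊨ A₂^acc` iff condition
(ii) holds at `n`. -/
theorem Aacc_characterizes_accessibility (S : AccessSpec) (T : XTree)
    (hT : Conforms T S.D) (n : Pos) (hn : T.IsNode n)
    (helem : (typeAt T n).isSome = true) :
    (evalQ T (fun _ => True) (XQual.path (A1acc S)) n ↔ CondI S T n) ∧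
    (evalQ T (fun _ => True) (A2acc S) n ↔ CondII S T n) ∧
    (evalQ T (fun _ => True) (Aacc S) n ↔ Accessible S T n) := by
  have hI := evalQ_A1acc hT helem
  have hII : evalQ T (fun _ => True) (A2acc S) n ↔ CondII S T n :=
    evalQ_A2acc.trans (and_iff_left helem)
  refine ⟨hI, hII, ?_⟩
  rw [Aacc, evalQ_and, hI, hII, Accessible, and_iff_right hn]
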